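/- Fix a scale r > 0 and a shortest path cover SPC(r). If v ∈ V is a vertex with dist(v, SPC(r)) > 2r and U = {u ∈ V : dist(u,v) ≤ r}, then dist(U, V∖U) > r. -/
import Mathlib


open SimpleGraph

universe u

variable {V : Type u}

/-- The length of a walk in a graph `G` with edge lengths `len`. -/
noncomputable def wlen {G : SimpleGraph V} (len : V → V → ℝ) {u v : V} (w : G.Walk u v) : ℝ :=
  (w.darts.map (fun e => len e.toProd.1 e.toProd.2)).sum

/-- A walk is a *shortest path* (w.r.t. the shortest-path metric `d`) if it is a
path whose total length equals the distance between its endpoints. -/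
def IsShortestPath {G : SimpleGraph V} (len d : V → V → ℝ) {u v : V}
    (w : G.Walk u v) : Prop :=
  w.IsPath ∧ wlen len w = d u v

/-- `d` is the shortest-path metric of the graph `G` with edge lengths `len`:
it is a lower bound on the length of every walk, and for every pair of vertices it
is attained by some path (a shortest path). -/
def IsShortestPathMetric (G : SimpleGraph V) (len d : V → V → ℝ) : Prop :=
  (∀ (u v : V) (w : G.Walk u v), d u v ≤ wlen len w) ∧
  (∀ u v : V, ∃ w : G.Walk u v, IsShortestPath len d w)

/-- The closed ball `B_r(v)` of radius `r` around `v` (w.r.t. `d`). -/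
def cball (d : V → V → ℝ) (v : V) (r : ℝ) : Set V := {u | d u v ≤ r}

/-- A *shortest path cover* for scale `r` (with parameter `c`): a set of hubs
hitting every shortest path of length in `(r, c*r/2]`. -/
def IsSPC (G : SimpleGraph V) (len d : V → V → ℝ) (c r : ℝ) (H : Set V) : Prop :=
  ∀ (u v : V) (w : G.Walk u v), IsShortestPath len d w →
    r < wlen len w → wlen len w ≤ c * r / 2 → ∃ h ∈ H, h ∈ w.support

/-- A minimal shortest path cover: no proper subset is a shortest path cover. -/
def IsMinimalSPC (G : SimpleGraph V) (len d : V → V → ℝ) (c r : ℝ) (H : Set V) : Prop :=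
  IsSPC G len d c r H ∧ ∀ H' : Set V, H' ⊂ H → ¬ IsSPC G len d c r H'

/-- `H` is locally `s`-sparse for scale `r`: every ball of radius `c*r/2` contains
at most `s` vertices of `H`. -/
def LocallySparse (d : V → V → ℝ) (c r : ℝ) (s : ℕ) (H : Set V) : Prop :=
  ∀ v : V, (H ∩ cball d v (c * r / 2)).ncard ≤ s

/-- Definition 1: the highway dimension of `G` is at most `k` if for every scale
`r > 0` and every ball of radius `c*r`, there are at most `k` vertices in the ball
hitting all shortest paths of length more than `r` that lie inside the ball. -/
def HighwayDimLE (G : SimpleGraph V) (len d : V → V → ℝ) (c : ℝ) (k : ℕ) : Prop :=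
  ∀ r : ℝ, 0 < r → ∀ v : V, ∃ H : Set V, H ⊆ cball d v (c * r) ∧ H.ncard ≤ k ∧
    ∀ (a b : V) (w : G.Walk a b), IsShortestPath len d w →
      (∀ x ∈ w.support, x ∈ cball d v (c * r)) → r < wlen len w →
      ∃ h ∈ H, h ∈ w.support


lemma wlen_nonneg {G : SimpleGraph V} (len : V → V → ℝ)
    (hlen_pos : ∀ u v : V, G.Adj u v → 0 < len u v) {u v : V} (w : G.Walk u v) :
    0 ≤ wlen len w := by
  apply List.sum_nonneg
  intro x hx
  simp only [List.mem_map] at hx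
  obtain ⟨e, he, rfl⟩ := hx
  exact le_of_lt (hlen_pos _ _ e.adj)

lemma wlen_append {G : SimpleGraph V} (len : V → V → ℝ) {u v w : V}
    (p : G.Walk u v) (q : G.Walk v w) :
    wlen len (p.append q) = wlen len p + wlen len q := by
  simp [wlen, SimpleGraph.Walk.darts_append]

lemma wlen_reverse {G : SimpleGraph V} (len : V → V → ℝ)
    (hs : ∀ u v : V, len u v = len v u) {u v : V} (p : G.Walk u v) :
    wlen len p.reverse = wlen len p := by
  simp only [wlen, SimpleGraph.Walk.darts_reverse, List.map_reverse, List.sum_reverse,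
    List.map_map]
  congr 1
  apply List.map_congr_left
  intro e _
  exact (hs _ _)

lemma d_symm {G : SimpleGraph V} {len d : V → V → ℝ}
    (hs : ∀ u v : V, len u v = len v u)
    (hm : IsShortestPathMetric G len d) (u v : V) : d u v = d v u := by
  have key : ∀ a b : V, d a b ≤ d b a := by
    intro a b
    obtain ⟨w, _, hw⟩ := hm.2 b a
    calc d a b ≤ wlen len w.reverse := hm.1 a b w.reverse
    _ = wlen len w := wlen_reverse len hs w
    _ = d b a := hw
  exact le_antisymm (key u v) (key v u)

/-- Lemma 6 of the paper: if `v` is at distance more than `2*r`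
from all hubs of a shortest path cover `SPC(r)` and `U = {u | dist(u,v) ≤ r}`, then
`dist(U, V ∖ U) > r`. -/
theorem statement1 {V : Type} [Fintype V] (G : SimpleGraph V) (len d : V → V → ℝ)
    (hlen_symm : ∀ u v : V, len u v = len v u)
    (hlen_pos : ∀ u v : V, G.Adj u v → 0 < len u v)
    (hmetric : IsShortestPathMetric G len d)
    (c : ℝ) (hc : 4 ≤ c) (r : ℝ) (hr : 0 < r)
    (H : Set V) (hH : IsSPC G len d c r H)
    (v : V) (hfar : ∀ h ∈ H, 2 * r < d v h) :
    ∀ u₁ ∈ ({u : V | d u v ≤ r} : Set V), ∀ u₂ ∈ (({u : V | d u v ≤ r} : Set V))ᶜ,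
      r < d u₁ u₂ := by
  classical
  intro u₁ hu₁ u₂ hu₂
  by_contra hle
  push_neg at hle
  simp only [Set.mem_setOf_eq, Set.mem_compl_iff] at hu₁ hu₂
  push_neg at hu₂
  obtain ⟨w, hwpath, hwlen⟩ := hmetric.2 v u₂
  obtain ⟨w₁, _, hw₁⟩ := hmetric.2 v u₁
  obtain ⟨w₂, _, hw₂⟩ := hmetric.2 u₁ u₂
  have hdvu₁ : d v u₁ ≤ r := by rw [d_symm hlen_symm hmetric]; exact hu₁
  have hL1 : d v u₂ ≤ 2 * r := by
    have := hmetric.1 v u₂ (w₁.append w₂)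
    rw [wlen_append, hw₁, hw₂] at this
    linarith
  have hL2 : r < d v u₂ := by rw [d_symm hlen_symm hmetric]; exact hu₂
  have hLcr : wlen len w ≤ c * r / 2 := by rw [hwlen]; nlinarith
  obtain ⟨h, hhH, hhsup⟩ := hH v u₂ w ⟨hwpath, hwlen⟩ (by rw [hwlen]; exact hL2) hLcr
  have hdvh : d v h ≤ wlen len w := by
    have hsplit := SimpleGraph.Walk.take_spec w hhsup
    calc d v h ≤ wlen len (w.takeUntil h hhsup) := hmetric.1 v h _
    _ ≤ wlen len (w.takeUntil h hhsup) + wlen len (w.dropUntil h hhsup) :=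
        le_add_of_nonneg_right (wlen_nonneg len hlen_pos _)
    _ = wlen len w := by rw [← wlen_append, hsplit]
  have := hfar h hhH
  rw [hwlen] at hdvh
  linarith
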